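/- Injectivity criterion via Kronecker-delta quasi-morphisms: if f₁,…,f_k are pairwise commuting elements of a group Γ and there exist homogeneous quasi-morphisms ψ₁,…,ψ_k on Γ with ψ_i(f_j) = δ_{ij}, then f₁,…,f_k generate a free abelian subgroup of rank k, i.e. the map ℤ^k → Γ, (d₁,…,d_k) ↦ f₁^{d₁}⋯f_k^{d_k}, is an injective group homomorphism. -/

import Mathlib

def IsQuasimorphism {Γ : Type*} [Group Γ] (ψ : Γ → ℝ) : Prop :=
  ∃ A : ℝ, 0 ≤ A ∧ ∀ g h : Γ, |ψ (g * h) - ψ g - ψ h| ≤ A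

def IsHomogeneousQM {Γ : Type*} [Group Γ] (ψ : Γ → ℝ) : Prop :=
  ∀ (g : Γ) (n : ℤ), ψ (g ^ n) = n * ψ g

/-!
The defect `ψ (g * h) - ψ g - ψ h` of a homogeneous quasi-morphism on a commuting pair `g, h`
is multiplied by `n` when `(g, h)` is replaced by `(gⁿ, hⁿ)`, since `(g * h)ⁿ = gⁿ * hⁿ`; being
bounded, it vanishes. So `ψᵢ` is additive on products of the commuting `f_j ^ d_j`, and
`ψᵢ (f₁ ^ d₁ ⋯ f_k ^ d_k) = dᵢ` recovers the exponents from the product.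
-/

lemma eq_zero_of_forall_nat_mul_abs_le {x A : ℝ} (h : ∀ n : ℕ, n * |x| ≤ A) : x = 0 := by
  by_contra hx
  obtain ⟨n, hn⟩ := exists_nat_gt (A / |x|)
  linarith [h n, (div_lt_iff₀ (abs_pos.mpr hx)).mp hn]

namespace IsHomogeneousQM

variable {Γ : Type*} [Group Γ] {ψ : Γ → ℝ}

lemma map_one (hhom : IsHomogeneousQM ψ) : ψ 1 = 0 := by
  simpa using hhom 1 0

lemma map_mul_of_commute (hhom : IsHomogeneousQM ψ) (hqm : IsQuasimorphism ψ) {g h : Γ}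
    (hgh : Commute g h) : ψ (g * h) = ψ g + ψ h := by
  obtain ⟨A, -, hA⟩ := hqm
  have hdefect : ∀ n : ℕ, n * |ψ (g * h) - ψ g - ψ h| ≤ A := by
    intro n
    have hn := hA (g ^ (n : ℤ)) (h ^ (n : ℤ))
    rw [← hgh.mul_zpow, hhom, hhom, hhom] at hn
    calc (n : ℝ) * |ψ (g * h) - ψ g - ψ h|
        = |(n : ℤ) * ψ (g * h) - (n : ℤ) * ψ g - (n : ℤ) * ψ h| := by
          rw [← abs_of_nonneg (Nat.cast_nonneg (α := ℝ) n), ← abs_mul]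
          push_cast
          ring_nf
      _ ≤ A := hn
  linarith [eq_zero_of_forall_nat_mul_abs_le hdefect]

lemma map_list_prod (hhom : IsHomogeneousQM ψ) (hqm : IsQuasimorphism ψ) :
    ∀ {l : List Γ}, l.Pairwise Commute → ψ l.prod = (l.map ψ).sum
  | [], _ => by simpa using hhom.map_one
  | a :: l, hl => by
    rw [List.pairwise_cons] at hl
    rw [List.prod_cons, hhom.map_mul_of_commute hqm (Commute.list_prod_right _ _ hl.1),
      map_list_prod hhom hqm hl.2, List.map_cons, List.sum_cons]

lemma map_prod_ofFn_zpow (hhom : IsHomogeneousQM ψ) (hqm : IsQuasimorphism ψ) {k : ℕ}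
    {f : Fin k → Γ} (hcomm : ∀ i j, Commute (f i) (f j)) (d : Fin k → ℤ) :
    ψ (List.ofFn fun j => f j ^ d j).prod = ∑ j, d j * ψ (f j) := by
  have hpairwise : (List.ofFn fun j => f j ^ d j).Pairwise Commute :=
    List.pairwise_ofFn.mpr fun i j _ => (hcomm i j).zpow_zpow _ _
  rw [hhom.map_list_prod hqm hpairwise, List.map_ofFn, List.sum_ofFn]
  exact Finset.sum_congr rfl fun j _ => hhom (f j) (d j)

end IsHomogeneousQM

/-- Pairwise commuting elements detected by Kronecker-delta homogeneous
quasi-morphisms generate a free abelian subgroup of rank `k`. -/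
theorem free_abelian_from_delta_qms {Γ : Type*} [Group Γ] (k : ℕ)
    (f : Fin k → Γ) (hcomm : ∀ i j, Commute (f i) (f j))
    (ψ : Fin k → Γ → ℝ)
    (hqm : ∀ i, IsQuasimorphism (ψ i)) (hhom : ∀ i, IsHomogeneousQM (ψ i))
    (hdelta : ∀ i j, ψ i (f j) = if i = j then 1 else 0) :
    Function.Injective (fun d : Fin k → ℤ => (List.ofFn fun i => f i ^ d i).prod) := by
  have hcoord : ∀ (d : Fin k → ℤ) (i : Fin k), ψ i (List.ofFn fun j => f j ^ d j).prod = d i := by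
    intro d i
    simp [(hhom i).map_prod_ofFn_zpow (hqm i) hcomm, hdelta]
  intro d d' hdd'
  funext i
  exact_mod_cast (hcoord d i).symm.trans ((congrArg (ψ i) hdd').trans (hcoord d' i))
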